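/- arXiv:0804.0292 — 2 statements merged into one kernel-verified Lean document; each statement's English description precedes it below -/
import Mathlib

section
/- For any real symmetric positive semidefinite n×n matrix Z and any orthogonal projection matrix p (i.e., p² = p and pᵀ = p), one has tr((pZ)²) ≤ tr(pZ²), with equality if and only if Z commutes with p. -/
open Matrix

/-!
With `q = 1 - p`, the matrix `M = q Z p` satisfies `Mᴴ M = p Z q Z p`, whose trace is
`tr(p Z²) - tr((p Z)²)`. So the gap in the inequality is the squared Frobenius norm of `q Z p`;
it vanishes iff `q Z p = 0`, and for self-adjoint `Z` that happens iff `Z` commutes with `p`.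
-/

namespace IsStarProjection

variable {A : Type*} [Ring A] [StarRing A] {p z : A}

theorem star_one_sub_mul_mul (hp : IsStarProjection p) (hz : IsSelfAdjoint z) :
    star ((1 - p) * z * p) = p * z * (1 - p) := by
  simp only [star_mul, star_sub, star_one, hp.isSelfAdjoint.star_eq, hz.star_eq, mul_assoc]

theorem star_mul_self_one_sub_mul_mul (hp : IsStarProjection p) (hz : IsSelfAdjoint z) :
    star ((1 - p) * z * p) * ((1 - p) * z * p) = p * z * z * p - p * z * p * z * p := by
  have hq : (1 - p) * (1 - p) = 1 - p := hp.one_sub.isIdempotentElem.eq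
  calc star ((1 - p) * z * p) * ((1 - p) * z * p)
      = p * z * ((1 - p) * (1 - p)) * z * p := by
        rw [hp.star_one_sub_mul_mul hz]; noncomm_ring
    _ = p * z * z * p - p * z * p * z * p := by rw [hq]; noncomm_ring

theorem commute_iff_one_sub_mul_mul_eq_zero (hp : IsStarProjection p) (hz : IsSelfAdjoint z) :
    Commute z p ↔ (1 - p) * z * p = 0 := by
  constructor
  · intro h
    rw [mul_assoc, h.eq, ← mul_assoc, hp.one_sub_mul_self, zero_mul]
  · intro h
    have hzp : z * p = p * z * p := by
      rw [← sub_eq_zero, ← h]; noncomm_ring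
    have hpz : p * z = p * z * p := by
      simpa only [star_mul, hp.isSelfAdjoint.star_eq, hz.star_eq, mul_assoc] using
        congrArg star hzp
    exact hzp.trans hpz.symm

end IsStarProjection

namespace Matrix

variable {n R : Type*} [Fintype n] [DecidableEq n] [CommRing R] [StarRing R]
  {Z p : Matrix n n R}

theorem trace_star_mul_self_one_sub_mul_mul (hp : IsStarProjection p) (hZ : IsSelfAdjoint Z) :
    (star ((1 - p) * Z * p) * ((1 - p) * Z * p)).trace =
      (p * Z ^ 2).trace - ((p * Z) ^ 2).trace := by
  have hpp : p * p = p := hp.isIdempotentElem.eq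
  rw [hp.star_mul_self_one_sub_mul_mul hZ, trace_sub, trace_mul_cycle (p * Z) Z p,
    trace_mul_cycle (p * Z * p) Z p]
  simp only [← mul_assoc, hpp, sq]

variable [PartialOrder R] [StarOrderedRing R]

theorem trace_sq_mul_le_trace_mul_sq (hp : IsStarProjection p) (hZ : IsSelfAdjoint Z) :
    ((p * Z) ^ 2).trace ≤ (p * Z ^ 2).trace := by
  rw [← sub_nonneg, ← trace_star_mul_self_one_sub_mul_mul hp hZ]
  exact (posSemidef_conjTranspose_mul_self _).trace_nonneg

theorem trace_sq_mul_eq_trace_mul_sq_iff [NoZeroDivisors R] (hp : IsStarProjection p)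
    (hZ : IsSelfAdjoint Z) : ((p * Z) ^ 2).trace = (p * Z ^ 2).trace ↔ Commute Z p := by
  rw [eq_comm, ← sub_eq_zero, ← trace_star_mul_self_one_sub_mul_mul hp hZ,
    star_eq_conjTranspose, trace_conjTranspose_mul_self_eq_zero_iff,
    hp.commute_iff_one_sub_mul_mul_eq_zero hZ]

end Matrix

/-- For a real symmetric positive semidefinite matrix `Z` and an orthogonal projection `p`,
`tr((pZ)²) ≤ tr(pZ²)`, with equality iff `Z` commutes with `p`. -/
theorem stmt1 (n : ℕ) (Z p : Matrix (Fin n) (Fin n) ℝ)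
    (hZ : Z.PosSemidef) (hpsym : pᵀ = p) (hpidem : p * p = p) :
    Matrix.trace ((p * Z) ^ 2) ≤ Matrix.trace (p * Z ^ 2) ∧
    (Matrix.trace ((p * Z) ^ 2) = Matrix.trace (p * Z ^ 2) ↔ Z * p = p * Z) := by
  have hZ' : IsSelfAdjoint Z := hZ.isHermitian.isSelfAdjoint
  have hp : IsStarProjection p := ⟨hpidem, by
    rw [IsSelfAdjoint, star_eq_conjTranspose, conjTranspose_eq_transpose_of_trivial, hpsym]⟩
  exact ⟨trace_sq_mul_le_trace_mul_sq hp hZ', trace_sq_mul_eq_trace_mul_sq_iff hp hZ'⟩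
end

section
/- Let h₁, …, hₙ be positive reals with h₁ ≤ ⋯ ≤ hₙ, and suppose ∏_{i=1}^n h_i ≤ C for some constant C > 0. Then for any partition λ of m with at most n parts and conjugate λ* having parts λ*₁ ≥ ⋯ ≥ λ*_t, one has ∏_{ℓ=1}^{t} h_ℓ^{λ*_ℓ} ≤ C^{m/n}. -/
/-!
Pad the conjugate parts `μ` with zeros to weights `w` on all `n` indices; `w` is antitone while
`log h` is monotone, so Chebyshev's sum inequality gives
`n · ∑ wᵢ log hᵢ ≤ (∑ wᵢ)(∑ log hᵢ) ≤ m log C`.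
-/

open Finset

theorem Antivary.prod_pow_pow_card_le_prod_pow_sum {ι : Type*} [Fintype ι] {h : ι → ℝ}
    {w : ι → ℕ} (hwh : Antivary w h) (hpos : ∀ i, 0 < h i) :
    (∏ i, h i ^ w i) ^ Fintype.card ι ≤ (∏ i, h i) ^ ∑ i, w i := by
  have hlog : Antivary (fun i => (w i : ℝ)) (fun i => Real.log (h i)) := fun i j hij =>
    Nat.cast_le.2 (hwh ((Real.log_lt_log_iff (hpos i) (hpos j)).1 hij))
  have hprod_pos : 0 < ∏ i, h i := prod_pos fun i _ => hpos i
  rw [← Real.log_le_log_iff (pow_pos (prod_pos fun i _ => pow_pos (hpos i) _) _)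
    (pow_pos hprod_pos _), Real.log_pow, Real.log_pow,
    Real.log_prod fun i _ => (hpos i).ne', Real.log_prod fun i _ => (pow_pos (hpos i) _).ne']
  simpa only [Real.log_pow, Nat.cast_sum] using hlog.card_mul_sum_le_sum_mul_sum

theorem Fin.antitone_append {α : Type*} [Preorder α] {t k : ℕ} {a : Fin t → α} {b : Fin k → α}
    (ha : Antitone a) (hb : Antitone b) (hba : ∀ i j, b j ≤ a i) : Antitone (Fin.append a b) := by
  intro i j hij
  induction i using Fin.addCases with
  | left i =>
    induction j using Fin.addCases with
    | left j => simpa using ha hij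
    | right j => simpa using hba i j
  | right i =>
    induction j using Fin.addCases with
    | left j =>
      exact absurd (Fin.le_def.1 hij) (by simp only [Fin.val_natAdd, Fin.val_castAdd]; omega)
    | right j => simpa using hb ((Fin.natAdd_le_natAdd_iff t).1 hij)

theorem Real.le_rpow_div_of_pow_le {x C : ℝ} {m n : ℕ} (hx : 0 ≤ x) (hC : 0 ≤ C) (hn : n ≠ 0)
    (h : x ^ n ≤ C ^ m) : x ≤ C ^ ((m : ℝ) / n) := by
  rw [← pow_le_pow_iff_left₀ hx (by positivity) hn, ← Real.rpow_mul_natCast hC,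
    div_mul_cancel₀ _ (by exact_mod_cast hn), Real.rpow_natCast]
  exact h

theorem stmt16_general (n t m : ℕ) (hn : 0 < n) (ht : t ≤ n) (h : Fin n → ℝ)
    (hpos : ∀ i, 0 < h i) (hmono : Monotone h)
    (C : ℝ) (hprod : ∏ i, h i ≤ C)
    (μ : Fin t → ℕ) (hanti : Antitone μ)
    (hsum : ∑ ℓ, μ ℓ = m) :
    (∏ ℓ : Fin t, h (Fin.castLE ht ℓ) ^ μ ℓ) ≤ C ^ ((m : ℝ) / n) := by
  obtain ⟨k, rfl⟩ := Nat.exists_eq_add_of_le ht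
  set w : Fin (t + k) → ℕ := Fin.append μ 0
  have hw : Antitone w := Fin.antitone_append hanti antitone_const fun _ _ => Nat.zero_le _
  have hlhs : ∏ ℓ : Fin t, h (Fin.castLE ht ℓ) ^ μ ℓ = ∏ i, h i ^ w i := by
    simp only [w, Fin.prod_univ_add, Fin.append_left, Fin.append_right, Pi.zero_apply, pow_zero,
      prod_const_one, mul_one]
    rfl
  have hwsum : ∑ i, w i = m := by simp [w, Fin.sum_univ_add, hsum]
  have hprod_pos : 0 < ∏ i, h i := prod_pos fun i _ => hpos i
  rw [hlhs]
  refine Real.le_rpow_div_of_pow_le (prod_nonneg fun i _ => (pow_pos (hpos i) _).le)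
    (hprod_pos.le.trans hprod) hn.ne' ?_
  calc (∏ i, h i ^ w i) ^ (t + k) ≤ (∏ i, h i) ^ m := by
        simpa [hwsum] using (hw.antivary hmono).prod_pow_pow_card_le_prod_pow_sum hpos
    _ ≤ C ^ m := pow_le_pow_left₀ hprod_pos.le hprod m

/-- If `0 < h₁ ≤ ⋯ ≤ hₙ` with `∏ h_i ≤ C`, and `μ₁ ≥ ⋯ ≥ μ_t` are the conjugate parts
(each `≤ n`, `t ≤ n`) of a partition of `m`, then `∏_{ℓ≤t} h_ℓ^{μ_ℓ} ≤ C^{m/n}`. -/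
theorem stmt16 (n t m : ℕ) (hn : 0 < n) (ht : t ≤ n) (h : Fin n → ℝ)
    (hpos : ∀ i, 0 < h i) (hmono : Monotone h)
    (C : ℝ) (hC : 0 < C) (hprod : ∏ i, h i ≤ C)
    (μ : Fin t → ℕ) (hanti : Antitone μ) (hμpos : ∀ ℓ, 0 < μ ℓ) (hμn : ∀ ℓ, μ ℓ ≤ n)
    (hsum : ∑ ℓ, μ ℓ = m) :
    (∏ ℓ : Fin t, h (Fin.castLE ht ℓ) ^ μ ℓ) ≤ C ^ ((m : ℝ) / n) :=
  stmt16_general n t m hn ht h hpos hmono C hprod μ hanti hsum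
end
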